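/- arXiv:1504.02755 — 3 statements merged into one kernel-verified Lean document; each statement's English description precedes it below -/
import Mathlib

section
/- Let W be a graphon, G a finite graph with m edges, and 1 ≤ k ≤ m. If G_k denotes a uniformly random k-edge subgraph of G (on the same vertex set), then E[t(G_k, W)] = E_{x,X}[ C(I(G), k) / C(m, k) ], where for x ∈ [0,1]^{V(G)} chosen uniformly, X is a family of independent Bernoulli indicators with P(X_{ij} = 1) = W(x_i, x_j) for each edge {i,j} of G, and I(G) = Σ_{{i,j} ∈ E(G)} X_{ij}. -/
/-!
Expanding `∏_{e ∈ F} W_e` as a sum over the outcomes `u ⊇ F` of the `W`-random subgraph of `G`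
shows that `t(F, W)` is the probability that this random subgraph contains `F`. Summing over
the `k`-edge subgraphs `F` of `G`, each outcome `u` is counted `C(|u|, k)` times.
-/

open MeasureTheory Finset

/-- Lebesgue measure restricted to `[0,1]`. -/
noncomputable def μ01 : Measure ℝ := volume.restrict (Set.Icc 0 1)

/-- Product measure on `V → ℝ`, each coordinate uniform on `[0,1]`. -/
noncomputable def πμ (V : Type*) [Fintype V] : Measure (V → ℝ) :=
  Measure.pi fun _ => μ01

/-- `W` is a graphon: symmetric, measurable, with values in `[0,1]`. -/
def IsGraphon (W : ℝ → ℝ → ℝ) : Prop :=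
  Measurable (Function.uncurry W) ∧ (∀ x y, W x y = W y x) ∧
    ∀ x y, W x y ∈ Set.Icc (0 : ℝ) 1

/-- Value of `W` on an unordered pair of vertices (for symmetric `W` this is
just `W (x i) (x j)` on the edge `{i, j}`). -/
noncomputable def edgeVal (W : ℝ → ℝ → ℝ) {V : Type*} (x : V → ℝ) : Sym2 V → ℝ :=
  Sym2.lift ⟨fun i j => (W (x i) (x j) + W (x j) (x i)) / 2,
    fun i j => by simp [add_comm]⟩

/-- `∏_{{i,j} ∈ s} W(x_i, x_j)` for a finite set `s` of unordered pairs. -/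
noncomputable def prodEdges (W : ℝ → ℝ → ℝ) {V : Type*} (s : Finset (Sym2 V))
    (x : V → ℝ) : ℝ :=
  ∏ e ∈ s, edgeVal W x e

/-- Homomorphism density of the graph on `V` with edge set `s` in `W`. -/
noncomputable def homDensitySet {V : Type*} [Fintype V] (s : Finset (Sym2 V))
    (W : ℝ → ℝ → ℝ) : ℝ :=
  ∫ x : V → ℝ, prodEdges W s x ∂(πμ V)

/-- Homomorphism density `t(F, W)`. -/
noncomputable def homDensity {V : Type*} [Fintype V] (F : SimpleGraph V)
    [Fintype F.edgeSet] (W : ℝ → ℝ → ℝ) : ℝ :=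
  homDensitySet F.edgeFinset W

/-- `𝔾(G, W)(F)`: the probability that sampling along `G` from `W` yields the
edge-subgraph of `G` with edge set `s`. -/
noncomputable def sampleProb {V : Type*} [Fintype V] [DecidableEq V]
    (G : SimpleGraph V) [Fintype G.edgeSet] (W : ℝ → ℝ → ℝ)
    (s : Finset (Sym2 V)) : ℝ :=
  ∫ x : V → ℝ,
    (∏ e ∈ s, edgeVal W x e) * ∏ e ∈ G.edgeFinset \ s, (1 - edgeVal W x e) ∂(πμ V)

/-- `ℕ(G, W)(k)`: probability that the `W`-sample along `G` has exactly `k` edges. -/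
noncomputable def edgeCountDist {V : Type*} [Fintype V] [DecidableEq V]
    (G : SimpleGraph V) [Fintype G.edgeSet] (W : ℝ → ℝ → ℝ) (k : ℕ) : ℝ :=
  ∑ s ∈ G.edgeFinset.powerset.filter (fun s => s.card = k), sampleProb G W s

/-- `E[t(G_k, W)]` where `G_k` is a uniformly random `k`-edge subgraph of `G`. -/
noncomputable def avgSubDensity {V : Type*} [Fintype V] [DecidableEq V]
    (G : SimpleGraph V) [Fintype G.edgeSet] (W : ℝ → ℝ → ℝ) (k : ℕ) : ℝ :=
  ((G.edgeFinset.card.choose k : ℝ))⁻¹ *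
    ∑ s ∈ G.edgeFinset.powerset.filter (fun s => s.card = k), homDensitySet s W

/-- `G` contains a `4`-cycle. -/
def ContainsC4 {V : Type*} (G : SimpleGraph V) : Prop :=
  ∃ a b c d : V, a ≠ b ∧ a ≠ c ∧ a ≠ d ∧ b ≠ c ∧ b ≠ d ∧ c ≠ d ∧
    G.Adj a b ∧ G.Adj b c ∧ G.Adj c d ∧ G.Adj d a

theorem prod_eq_sum_superset_mul_prod_one_sub {ι R : Type*} [CommRing R] [DecidableEq ι]
    {s E : Finset ι} (hs : s ⊆ E) (p : ι → R) :
    ∏ i ∈ s, p i = ∑ u ∈ E.powerset with s ⊆ u, (∏ i ∈ u, p i) * ∏ i ∈ E \ u, (1 - p i) := by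
  -- expand `∏_{i ∈ E} (p i + q i)` with `q` vanishing on `s`: only the `u ⊇ s` survive
  set q : ι → R := fun i => if i ∈ s then 0 else 1 - p i
  have hq : ∀ u, ∏ i ∈ E \ u, q i = if s ⊆ u then ∏ i ∈ E \ u, (1 - p i) else 0 := by
    intro u
    split_ifs with hsu
    · exact prod_congr rfl fun i hi => if_neg fun his => (mem_sdiff.mp hi).2 (hsu his)
    · obtain ⟨i, his, hiu⟩ := not_subset.mp hsu
      exact prod_eq_zero (mem_sdiff.mpr ⟨hs his, hiu⟩) (if_pos his)
  calc ∏ i ∈ s, p i = ∏ i ∈ E, (p i + q i) := by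
        rw [← prod_subset hs fun i _ hi => by simp [q, hi]]
        exact prod_congr rfl fun i hi => by simp [q, hi]
    _ = ∑ u ∈ E.powerset with s ⊆ u, (∏ i ∈ u, p i) * ∏ i ∈ E \ u, (1 - p i) := by
        rw [prod_add, sum_filter]
        refine sum_congr rfl fun u _ => ?_
        rw [hq u]
        split_ifs <;> simp

theorem sum_powerset_card_sum_superset {ι M : Type*} [AddCommMonoid M] [DecidableEq ι]
    (E : Finset ι) (k : ℕ) (f : Finset ι → M) :
    ∑ s ∈ E.powerset with s.card = k, ∑ u ∈ E.powerset with s ⊆ u, f u =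
      ∑ u ∈ E.powerset, u.card.choose k • f u := by
  rw [sum_comm' (t' := E.powerset) (s' := fun u => u.powerset.filter (·.card = k))]
  · refine sum_congr rfl fun u _ => ?_
    rw [sum_const, ← powersetCard_eq_filter, card_powersetCard]
  · intro s u
    simp only [mem_filter, mem_powerset]
    exact ⟨fun ⟨⟨_, hsk⟩, huE, hsu⟩ => ⟨⟨hsu, hsk⟩, huE⟩,
      fun ⟨⟨hsu, hsk⟩, huE⟩ => ⟨⟨hsu.trans huE, hsk⟩, huE, hsu⟩⟩

instance : IsProbabilityMeasure μ01 :=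
  ⟨by simp [μ01, Real.volume_Icc]⟩

instance (V : Type*) [Fintype V] : IsProbabilityMeasure (πμ V) := by
  unfold πμ; infer_instance

namespace IsGraphon

variable {W : ℝ → ℝ → ℝ} {V : Type*}

theorem edgeVal_mem_Icc (hW : IsGraphon W) (x : V → ℝ) (e : Sym2 V) :
    edgeVal W x e ∈ Set.Icc (0 : ℝ) 1 := by
  induction e using Sym2.inductionOn with
  | hf i j =>
    obtain ⟨h₁, h₂⟩ := hW.2.2 (x i) (x j)
    obtain ⟨h₃, h₄⟩ := hW.2.2 (x j) (x i)
    exact ⟨by simp only [edgeVal, Sym2.lift_mk]; linarith,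
      by simp only [edgeVal, Sym2.lift_mk]; linarith⟩

theorem measurable_edgeVal (hW : IsGraphon W) (e : Sym2 V) :
    Measurable fun x : V → ℝ => edgeVal W x e := by
  induction e using Sym2.inductionOn with
  | hf i j =>
    have hij : Measurable fun x : V → ℝ => W (x i) (x j) :=
      hW.1.comp (f := fun x : V → ℝ => (x i, x j)) (by fun_prop)
    have hji : Measurable fun x : V → ℝ => W (x j) (x i) :=
      hW.1.comp (f := fun x : V → ℝ => (x j, x i)) (by fun_prop)
    exact (hij.add hji).div_const 2

theorem integrable_prod_mul_prod_one_sub [Fintype V] (hW : IsGraphon W)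
    (u v : Finset (Sym2 V)) :
    Integrable (fun x : V → ℝ =>
      (∏ e ∈ u, edgeVal W x e) * ∏ e ∈ v, (1 - edgeVal W x e)) (πμ V) := by
  refine (integrable_const (1 : ℝ)).mono' ?_ (ae_of_all _ fun x => ?_)
  · exact Measurable.aestronglyMeasurable <|
      (measurable_prod u fun e _ => hW.measurable_edgeVal e).mul
        (measurable_prod v fun e _ => measurable_const.sub (hW.measurable_edgeVal e))
  · have h := fun e => hW.edgeVal_mem_Icc x e
    have hp₀ : 0 ≤ ∏ e ∈ u, edgeVal W x e := prod_nonneg fun e _ => (h e).1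
    have hp₁ : ∏ e ∈ u, edgeVal W x e ≤ 1 :=
      prod_le_one (fun e _ => (h e).1) fun e _ => (h e).2
    have hq₀ : 0 ≤ ∏ e ∈ v, (1 - edgeVal W x e) :=
      prod_nonneg fun e _ => sub_nonneg.mpr (h e).2
    have hq₁ : ∏ e ∈ v, (1 - edgeVal W x e) ≤ 1 :=
      prod_le_one (fun e _ => sub_nonneg.mpr (h e).2) fun e _ => by linarith [(h e).1]
    rw [Real.norm_of_nonneg (mul_nonneg hp₀ hq₀)]
    exact mul_le_one₀ hp₁ hq₀ hq₁

variable [Fintype V] [DecidableEq V] {G : SimpleGraph V} [Fintype G.edgeSet]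

theorem homDensitySet_eq_sum_sampleProb (hW : IsGraphon W) {s : Finset (Sym2 V)}
    (hs : s ⊆ G.edgeFinset) :
    homDensitySet s W = ∑ u ∈ G.edgeFinset.powerset with s ⊆ u, sampleProb G W u := by
  simp only [homDensitySet, prodEdges, sampleProb,
    prod_eq_sum_superset_mul_prod_one_sub hs]
  exact integral_finsetSum _ fun u _ => hW.integrable_prod_mul_prod_one_sub _ _

end IsGraphon

theorem sum_range_edgeCountDist_mul {V : Type*} [Fintype V] [DecidableEq V]
    (G : SimpleGraph V) [Fintype G.edgeSet] (W : ℝ → ℝ → ℝ) (f : ℕ → ℝ) :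
    ∑ j ∈ range (G.edgeFinset.card + 1), edgeCountDist G W j * f j =
      ∑ u ∈ G.edgeFinset.powerset, sampleProb G W u * f u.card := by
  rw [← sum_fiberwise_of_maps_to fun u hu =>
    mem_range_succ_iff.mpr (card_le_card (mem_powerset.mp hu))]
  refine sum_congr rfl fun j _ => ?_
  rw [edgeCountDist, sum_mul]
  exact sum_congr rfl fun u hu => by rw [(mem_filter.mp hu).2]

theorem stmt2_general {n : ℕ} (G : SimpleGraph (Fin n)) [Fintype G.edgeSet]
    (W : ℝ → ℝ → ℝ) (hW : IsGraphon W) (k : ℕ) :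
    avgSubDensity G W k =
      ∑ j ∈ Finset.range (G.edgeFinset.card + 1),
        edgeCountDist G W j * ((j.choose k : ℝ) / (G.edgeFinset.card.choose k : ℝ)) := by
  rw [sum_range_edgeCountDist_mul, avgSubDensity,
    sum_congr rfl fun s hs =>
      hW.homDensitySet_eq_sum_sampleProb (mem_powerset.mp (mem_filter.mp hs).1),
    sum_powerset_card_sum_superset, mul_sum]
  exact sum_congr rfl fun u _ => by rw [nsmul_eq_mul]; ring

/-- `E[t(G_k, W)] = E_{x,X}[C(I(G), k) / C(m, k)]`, where the
right-hand side is computed via the distribution `ℕ(G, W)` of `I(G)`. -/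
theorem stmt2 {n : ℕ} (G : SimpleGraph (Fin n)) [Fintype G.edgeSet]
    (W : ℝ → ℝ → ℝ) (hW : IsGraphon W) (k : ℕ) (hk1 : 1 ≤ k)
    (hkm : k ≤ G.edgeFinset.card) :
    avgSubDensity G W k =
      ∑ j ∈ Finset.range (G.edgeFinset.card + 1),
        edgeCountDist G W j * ((j.choose k : ℝ) / (G.edgeFinset.card.choose k : ℝ)) :=
  stmt2_general G W hW k
end

section
/- Let W be a graphon, G a finite graph with m edges containing a 4-cycle, and p ∈ [0,1]. Suppose the distribution of the number of edges in a W-sample along G equals the binomial distribution B(m, p), i.e., N(G, W) = N(G, p). Then for every 1 ≤ k ≤ m, E[t(G_k, W)] = p^k, where G_k is a uniformly random k-edge subgraph of G. -/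
open MeasureTheory Finset

/-!
Expanding each missing edge factor as `W + (1 - W)` writes `∏_{e ∈ s} W` as the sum, over all
`F` with `s ⊆ F ⊆ E(G)`, of the integrands of `𝔾(G, W)(F)`. Summing over the `k`-sets `s` and
counting the `k`-subsets of each `F` gives `∑_s t(s, W) = ∑_j (j choose k) ℕ(G, W)(j)`, so the
left side depends on `W` only through `ℕ(G, W)`. The same algebraic identity for a constant weight
`p` evaluates the right side at `ℕ(G, p) = B(m, p)` as `(m choose k) p^k`.
-/

namespace Finset

variable {ι R : Type*} [DecidableEq ι] [CommRing R]

theorem prod_eq_sum_Icc_mul_prod_one_sub (a : ι → R) {s E : Finset ι} (hs : s ⊆ E) :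
    ∏ i ∈ s, a i = ∑ F ∈ Icc s E, (∏ i ∈ F, a i) * ∏ i ∈ E \ F, (1 - a i) := by
  have hdisj : ∀ T ∈ (E \ s).powerset, Disjoint s T := fun T hT =>
    disjoint_of_subset_right (mem_powerset.1 hT) disjoint_sdiff
  have hinj : Set.InjOn (s ∪ ·) ((E \ s).powerset : Set (Finset ι)) := fun T₁ h₁ T₂ h₂ h => by
    rw [← union_sdiff_cancel_left (hdisj T₁ h₁), ← union_sdiff_cancel_left (hdisj T₂ h₂)]
    exact congrArg (· \ s) h
  rw [Icc_eq_image_powerset hs, sum_image hinj]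
  calc ∏ i ∈ s, a i = (∏ i ∈ s, a i) * ∏ i ∈ E \ s, (a i + (1 - a i)) := by simp
    _ = ∑ T ∈ (E \ s).powerset,
          (∏ i ∈ s, a i) * ((∏ i ∈ T, a i) * ∏ i ∈ (E \ s) \ T, (1 - a i)) := by
      rw [prod_add, mul_sum]
    _ = _ := sum_congr rfl fun T hT => by
      rw [prod_union (hdisj T hT), sdiff_sdiff_left, sup_eq_union, mul_assoc]

theorem sum_powersetCard_sum_Icc {M : Type*} [AddCommMonoid M] (E : Finset ι) (k : ℕ)
    (f : Finset ι → M) :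
    ∑ s ∈ E.powersetCard k, ∑ F ∈ Icc s E, f F = ∑ F ∈ E.powerset, (#F).choose k • f F := by
  rw [sum_comm' (t' := E.powerset) (s' := powersetCard k)]
  · simp_rw [sum_const, card_powersetCard]
  · intro s F
    simp only [mem_powersetCard, mem_Icc, mem_powerset]
    exact ⟨fun ⟨⟨_, hk⟩, hsF, hFE⟩ => ⟨⟨hsF, hk⟩, hFE⟩,
      fun ⟨⟨hsF, hk⟩, hFE⟩ => ⟨⟨hsF.trans hFE, hk⟩, hsF, hFE⟩⟩

/-- With `a i` the probability of the independent event `i`, this computes the `k`-th factorial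
moment of the number of events that occur from its distribution. -/
theorem sum_powersetCard_prod_eq_sum_choose_mul (a : ι → R) (E : Finset ι) (k : ℕ) :
    ∑ s ∈ E.powersetCard k, ∏ i ∈ s, a i =
      ∑ j ∈ range (#E + 1), (j.choose k : R) *
        ∑ F ∈ E.powersetCard j, (∏ i ∈ F, a i) * ∏ i ∈ E \ F, (1 - a i) := by
  calc ∑ s ∈ E.powersetCard k, ∏ i ∈ s, a i
      = ∑ s ∈ E.powersetCard k, ∑ F ∈ Icc s E, (∏ i ∈ F, a i) * ∏ i ∈ E \ F, (1 - a i) :=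
        sum_congr rfl fun s hs =>
          prod_eq_sum_Icc_mul_prod_one_sub a (mem_powersetCard.1 hs).1
    _ = ∑ j ∈ range (#E + 1), ∑ F ∈ E.powersetCard j,
          (#F).choose k • ((∏ i ∈ F, a i) * ∏ i ∈ E \ F, (1 - a i)) := by
        rw [sum_powersetCard_sum_Icc, sum_powerset]
    _ = _ := sum_congr rfl fun j _ => by
        rw [mul_sum]
        exact sum_congr rfl fun F hF => by rw [(mem_powersetCard.1 hF).2, nsmul_eq_mul]

end Finset

theorem sum_choose_mul_binomial {R : Type*} [CommRing R] (m k : ℕ) (p : R) :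
    ∑ j ∈ range (m + 1), (j.choose k : R) * (m.choose j * p ^ j * (1 - p) ^ (m - j)) =
      m.choose k * p ^ k := by
  have hcard : ∀ j, ∀ F ∈ powersetCard j (range m), #F = j ∧ #(range m \ F) = m - j :=
    fun j F hF => by
      obtain ⟨hFm, hFj⟩ := mem_powersetCard.1 hF
      exact ⟨hFj, by rw [card_sdiff_of_subset hFm, card_range, hFj]⟩
  calc ∑ j ∈ range (m + 1), (j.choose k : R) * (m.choose j * p ^ j * (1 - p) ^ (m - j))
      = ∑ j ∈ range (m + 1), (j.choose k : R) *
          ∑ F ∈ powersetCard j (range m), (∏ _ ∈ F, p) * ∏ _ ∈ range m \ F, (1 - p) :=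
        sum_congr rfl fun j _ => by
          rw [sum_congr rfl fun F hF => by
            rw [prod_const, prod_const, (hcard j F hF).1, (hcard j F hF).2]]
          rw [sum_const, card_powersetCard, card_range, nsmul_eq_mul, mul_assoc]
    _ = ∑ s ∈ powersetCard k (range m), ∏ _ ∈ s, p := by
        rw [sum_powersetCard_prod_eq_sum_choose_mul, card_range]
    _ = m.choose k * p ^ k := by
        rw [sum_congr rfl fun s hs => by rw [prod_const, (hcard k s hs).1]]
        rw [sum_const, card_powersetCard, card_range, nsmul_eq_mul]

instance inst_s3 : IsProbabilityMeasure μ01 :=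
  ⟨by rw [μ01, Measure.restrict_apply_univ, Real.volume_Icc]; norm_num⟩

section Graphon

variable {V : Type*} {W : ℝ → ℝ → ℝ}

lemma measurable_edgeVal (hW : Measurable (Function.uncurry W)) (e : Sym2 V) :
    Measurable fun x : V → ℝ => edgeVal W x e := by
  induction e using Sym2.ind with
  | _ i j =>
    have hij : Measurable fun x : V → ℝ => Function.uncurry W (x i, x j) :=
      hW.comp ((measurable_pi_apply i).prodMk (measurable_pi_apply j))
    have hji : Measurable fun x : V → ℝ => Function.uncurry W (x j, x i) :=
      hW.comp ((measurable_pi_apply j).prodMk (measurable_pi_apply i))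
    exact (hij.add hji).div_const 2

lemma edgeVal_mem_Icc (hW : ∀ x y, W x y ∈ Set.Icc (0 : ℝ) 1) (x : V → ℝ) (e : Sym2 V) :
    edgeVal W x e ∈ Set.Icc (0 : ℝ) 1 := by
  induction e using Sym2.ind with
  | _ i j =>
    obtain ⟨h₁, h₂⟩ := hW (x i) (x j)
    obtain ⟨h₃, h₄⟩ := hW (x j) (x i)
    simp only [edgeVal, Sym2.lift_mk, Set.mem_Icc]
    constructor <;> linarith

lemma integrable_prod_edgeVal_mul_prod_one_sub [Fintype V] (hW : IsGraphon W)
    (s t : Finset (Sym2 V)) :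
    Integrable (fun x : V → ℝ =>
      (∏ e ∈ s, edgeVal W x e) * ∏ e ∈ t, (1 - edgeVal W x e)) (πμ V) := by
  have hmeas : Measurable fun x : V → ℝ =>
      (∏ e ∈ s, edgeVal W x e) * ∏ e ∈ t, (1 - edgeVal W x e) :=
    (Finset.measurable_prod s fun e _ => measurable_edgeVal hW.1 e).mul
      (Finset.measurable_prod t fun e _ => measurable_const.sub (measurable_edgeVal hW.1 e))
  refine Integrable.of_bound hmeas.aestronglyMeasurable 1 (ae_of_all _ fun x => ?_)
  have hle : ∀ e, ‖edgeVal W x e‖ ≤ 1 ∧ ‖1 - edgeVal W x e‖ ≤ 1 := fun e => by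
    obtain ⟨h₀, h₁⟩ := edgeVal_mem_Icc hW.2.2 x e
    simp only [Real.norm_eq_abs, abs_le]
    exact ⟨⟨by linarith, h₁⟩, ⟨by linarith, by linarith⟩⟩
  rw [norm_mul, norm_prod, norm_prod]
  exact mul_le_one₀ (prod_le_one (fun _ _ => norm_nonneg _) fun e _ => (hle e).1)
    (prod_nonneg fun _ _ => norm_nonneg _) (prod_le_one (fun _ _ => norm_nonneg _)
      fun e _ => (hle e).2)

theorem sum_homDensitySet_powersetCard [Fintype V] [DecidableEq V] (hW : IsGraphon W)
    (G : SimpleGraph V) [Fintype G.edgeSet] (k : ℕ) :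
    ∑ s ∈ G.edgeFinset.powersetCard k, homDensitySet s W =
      ∑ j ∈ range (#G.edgeFinset + 1), (j.choose k : ℝ) * edgeCountDist G W j := by
  have hint := integrable_prod_edgeVal_mul_prod_one_sub hW (V := V)
  simp only [homDensitySet, prodEdges, edgeCountDist, sampleProb, ← powersetCard_eq_filter]
  rw [← integral_finsetSum _ fun s _ => by simpa using hint s ∅]
  simp_rw [sum_powersetCard_prod_eq_sum_choose_mul]
  rw [integral_finsetSum _ fun j _ => (integrable_finsetSum _ fun F _ => hint _ _).const_mul _]
  simp_rw [integral_const_mul, integral_finsetSum _ fun F _ => hint _ _]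

end Graphon

theorem stmt3_general {n : ℕ} (G : SimpleGraph (Fin n)) [Fintype G.edgeSet]
    (W : ℝ → ℝ → ℝ) (hW : IsGraphon W) (p : ℝ)
    (hN : ∀ j, edgeCountDist G W j =
      (G.edgeFinset.card.choose j : ℝ) * p ^ j * (1 - p) ^ (G.edgeFinset.card - j)) :
    ∀ k, 1 ≤ k → k ≤ G.edgeFinset.card → avgSubDensity G W k = p ^ k := by
  intro k _ hk
  have hsum := sum_homDensitySet_powersetCard hW G k
  simp_rw [hN, sum_choose_mul_binomial] at hsum
  rw [avgSubDensity, ← powersetCard_eq_filter, hsum,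
    inv_mul_cancel_left₀ (Nat.cast_ne_zero.2 (Nat.choose_pos hk).ne')]

/-- if `G` contains a `4`-cycle and `ℕ(G, W) = B(m, p)`, then
`E[t(G_k, W)] = p^k` for all `1 ≤ k ≤ m`. -/
theorem stmt3 {n : ℕ} (G : SimpleGraph (Fin n)) [Fintype G.edgeSet]
    (W : ℝ → ℝ → ℝ) (hW : IsGraphon W) (p : ℝ) (hp : p ∈ Set.Icc (0 : ℝ) 1)
    (hC4 : ContainsC4 G)
    (hN : ∀ j, edgeCountDist G W j =
      (G.edgeFinset.card.choose j : ℝ) * p ^ j * (1 - p) ^ (G.edgeFinset.card - j)) :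
    ∀ k, 1 ≤ k → k ≤ G.edgeFinset.card → avgSubDensity G W k = p ^ k :=
  stmt3_general G W hW p hN
end

section
/- Let W be a graphon with ∫∫ W(x,y) dx dy = p. If t(C_4, W) = p^4, then W(x,y) = p for almost every (x,y) ∈ [0,1]^2, where t(C_4, W) = ∫_{[0,1]^4} W(a,b)W(b,c)W(c,d)W(d,a) da db dc dd. -/
open MeasureTheory Finset

theorem ae_eq_zero_of_forall_setIntegral_prod_eq_zero {α β : Type*} [MeasurableSpace α]
    [MeasurableSpace β] {μ : Measure (α × β)} {f : α × β → ℝ}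
    (hf : Integrable f μ)
    (h : ∀ ⦃s : Set α⦄, MeasurableSet s → ∀ ⦃t : Set β⦄, MeasurableSet t →
      ∫ z in s ×ˢ t, f z ∂μ = 0) :
    ∀ᵐ z ∂μ, f z = 0 := by
  have hpos_neg : (fun z => ENNReal.ofReal (f z)) =ᵐ[μ] fun z => ENNReal.ofReal (-f z) := by
    refine ae_eq_of_setLIntegral_prod_eq hf.aemeasurable.ennreal_ofReal
      hf.neg.aemeasurable.ennreal_ofReal hf.lintegral_lt_top.ne fun s hs t ht => ?_
    have hst : Integrable f (μ.restrict (s ×ˢ t)) := hf.restrict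
    have hsplit := integral_eq_lintegral_pos_part_sub_lintegral_neg_part hst
    rw [h hs ht] at hsplit
    have hneg : ∫⁻ z in s ×ˢ t, ENNReal.ofReal (-f z) ∂μ < ⊤ := hst.neg.lintegral_lt_top
    exact (ENNReal.toReal_eq_toReal_iff' hst.lintegral_lt_top.ne hneg.ne).mp (by linarith)
  filter_upwards [hpos_neg] with z hz
  have hmax := congrArg ENNReal.toReal hz
  simp only [ENNReal.toReal_ofReal'] at hmax
  grind

theorem abs_integral_le_of_abs_le {α : Type*} [MeasurableSpace α] {μ : Measure α}
    [IsProbabilityMeasure μ] {f : α → ℝ} {C : ℝ} (hf : ∀ a, |f a| ≤ C) :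
    |∫ a, f a ∂μ| ≤ C := by
  simpa using norm_integral_le_of_norm_le_const (μ := μ)
    (.of_forall fun a => (Real.norm_eq_abs _).trans_le (hf a))

section Codegree

variable {α β : Type*} [MeasurableSpace β]

noncomputable def degree (ν : Measure β) (U : α → β → ℝ) (a : α) : ℝ :=
  ∫ b, U a b ∂ν

noncomputable def codegree (ν : Measure β) (U : α → β → ℝ) (a c : α) : ℝ :=
  ∫ b, U a b * U c b ∂ν

variable {ν : Measure β} {U : α → β → ℝ} {C : ℝ}

theorem codegree_comm (U : α → β → ℝ) (a c : α) : codegree ν U a c = codegree ν U c a := by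
  simp only [codegree, mul_comm]

theorem measurable_degree [MeasurableSpace α] [SFinite ν] (hU : Measurable (Function.uncurry U)) :
    Measurable (degree ν U) :=
  (hU.stronglyMeasurable.integral_prod_right' (ν := ν)).measurable

theorem measurable_codegree [MeasurableSpace α] [SFinite ν] (hU : Measurable (Function.uncurry U)) :
    Measurable (Function.uncurry (codegree ν U)) := by
  have h : Measurable fun q : (α × α) × β => U q.1.1 q.2 * U q.1.2 q.2 := by fun_prop
  exact (h.stronglyMeasurable.integral_prod_right' (ν := ν)).measurable

theorem abs_degree_le [IsProbabilityMeasure ν] (hC : ∀ a b, |U a b| ≤ C) (a : α) :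
    |degree ν U a| ≤ C :=
  abs_integral_le_of_abs_le (hC a)

theorem abs_codegree_le [IsProbabilityMeasure ν] (hC : ∀ a b, |U a b| ≤ C) (a c : α) :
    |codegree ν U a c| ≤ C * C :=
  abs_integral_le_of_abs_le fun b => (abs_mul _ _).trans_le
    (mul_le_mul (hC a b) (hC c b) (abs_nonneg _) ((abs_nonneg _).trans (hC a b)))

end Codegree

section KernelOperator

variable {α β : Type*} [MeasurableSpace α] [MeasurableSpace β] {μ : Measure α} {ν : Measure β}
  [IsFiniteMeasure μ] [IsFiniteMeasure ν] {U : α → β → ℝ} {C : ℝ}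

theorem integral_codegree_eq_integral_sq (hU : Measurable (Function.uncurry U))
    (hC : ∀ a b, |U a b| ≤ C) :
    ∫ z, codegree ν U z.1 z.2 ∂(μ.prod μ) = ∫ b, (∫ a, U a b ∂μ) ^ 2 ∂ν := by
  have hint : Integrable (fun q : β × (α × α) => U q.2.1 q.1 * U q.2.2 q.1)
      (ν.prod (μ.prod μ)) :=
    .of_bound (by fun_prop) (C * C) (.of_forall fun q => (abs_mul _ _).trans_le
      (mul_le_mul (hC _ _) (hC _ _) (abs_nonneg _) ((abs_nonneg _).trans (hC q.2.1 q.1))))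
  calc ∫ z, codegree ν U z.1 z.2 ∂(μ.prod μ)
      = ∫ b, ∫ z, U z.1 b * U z.2 b ∂(μ.prod μ) ∂ν := (integral_integral_swap hint).symm
    _ = ∫ b, (∫ a, U a b ∂μ) ^ 2 ∂ν := integral_congr_ae (.of_forall fun b =>
        (integral_prod_mul (fun a => U a b) (fun a => U a b)).trans (sq _).symm)

theorem ae_integral_eq_zero_of_codegree_ae_eq_zero (hU : Measurable (Function.uncurry U))
    (hC : ∀ a b, |U a b| ≤ C) (h : ∀ᵐ z ∂(μ.prod μ), codegree ν U z.1 z.2 = 0) :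
    ∀ᵐ b ∂ν, ∫ a, U a b ∂μ = 0 := by
  have hsq : ∫ b, (∫ a, U a b ∂μ) ^ 2 ∂ν = 0 := by
    rw [← integral_codegree_eq_integral_sq hU hC]
    exact integral_eq_zero_of_ae h
  have hmemLp : MemLp (fun b => ∫ a, U a b ∂μ) 2 ν :=
    .of_bound (hU.stronglyMeasurable.integral_prod_left).aestronglyMeasurable (C * μ.real .univ)
      (.of_forall fun b => norm_integral_le_of_norm_le_const
        (.of_forall fun a => (Real.norm_eq_abs _).trans_le (hC a b)))
  filter_upwards [(integral_eq_zero_iff_of_nonneg (fun b => sq_nonneg _)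
    hmemLp.integrable_sq).mp hsq] with b hb
  exact pow_eq_zero_iff two_ne_zero |>.mp hb

theorem ae_eq_zero_of_codegree_ae_eq_zero (hU : Measurable (Function.uncurry U))
    (hC : ∀ a b, |U a b| ≤ C) (h : ∀ᵐ z ∂(μ.prod μ), codegree ν U z.1 z.2 = 0) :
    ∀ᵐ z ∂(μ.prod ν), U z.1 z.2 = 0 := by
  have hint : Integrable (fun z : α × β => U z.1 z.2) (μ.prod ν) :=
    .of_bound hU.aestronglyMeasurable C (.of_forall fun z => hC z.1 z.2)
  refine ae_eq_zero_of_forall_setIntegral_prod_eq_zero hint fun s hs t ht => ?_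
  have hs : ∀ᵐ z ∂((μ.restrict s).prod (μ.restrict s)), codegree ν U z.1 z.2 = 0 := by
    rw [Measure.prod_restrict]
    exact ae_restrict_of_ae h
  have hint_st : Integrable (fun z : α × β => U z.1 z.2) ((μ.restrict s).prod (ν.restrict t)) := by
    rw [Measure.prod_restrict]
    exact hint.restrict
  rw [← Measure.prod_restrict, integral_prod_symm _ hint_st]
  exact integral_eq_zero_of_ae
    (ae_restrict_of_ae (ae_integral_eq_zero_of_codegree_ae_eq_zero hU hC hs))

end KernelOperator

section Variance

variable {Ω : Type*} [MeasurableSpace Ω] {μ : Measure Ω} [IsProbabilityMeasure μ] {X : Ω → ℝ}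

theorem sq_integral_le_integral_sq (hX : MemLp X 2 μ) : (∫ ω, X ω ∂μ) ^ 2 ≤ ∫ ω, X ω ^ 2 ∂μ := by
  have h := ProbabilityTheory.variance_nonneg X μ
  rw [ProbabilityTheory.variance_eq_sub hX] at h
  simpa using h

theorem ae_eq_integral_of_integral_sq_eq (hX : MemLp X 2 μ)
    (h : ∫ ω, X ω ^ 2 ∂μ = (∫ ω, X ω ∂μ) ^ 2) : ∀ᵐ ω ∂μ, X ω = ∫ ω, X ω ∂μ := by
  refine ProbabilityTheory.ae_eq_integral_of_variance_eq_zero hX ?_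
  rw [ProbabilityTheory.variance_eq_sub hX]
  simpa using sub_eq_zero.mpr h

end Variance

theorem codegree_sub_const {α β : Type*} [MeasurableSpace α] [MeasurableSpace β] {ν : Measure β}
    [IsProbabilityMeasure ν] {U : α → β → ℝ} {C : ℝ} (hU : Measurable (Function.uncurry U))
    (hC : ∀ a b, |U a b| ≤ C) (p : ℝ) (a c : α) :
    codegree ν (fun a b => U a b - p) a c
      = codegree ν U a c - p * degree ν U a - p * degree ν U c + p ^ 2 := by
  have hint : ∀ a, Integrable (U a) ν := fun a =>
    .of_bound (hU.comp measurable_prodMk_left).aestronglyMeasurable C (.of_forall (hC a))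
  have hint_mul : Integrable (fun b => U a b * U c b) ν :=
    .of_bound ((hint a).1.mul (hint c).1) (C * C) (.of_forall fun b => (abs_mul _ _).trans_le
      (mul_le_mul (hC a b) (hC c b) (abs_nonneg _) ((abs_nonneg _).trans (hC a b))))
  have hexpand : (fun b => (U a b - p) * (U c b - p))
      = fun b => U a b * U c b - p * U a b - p * U c b + p ^ 2 := by
    funext b; ring
  simp only [codegree, degree, hexpand]
  rw [integral_add ?_ (integrable_const _), integral_sub ?_ ((hint c).const_mul p),
    integral_sub hint_mul ((hint a).const_mul p), integral_const_mul, integral_const_mul,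
    integral_const]
  · simp
  · exact hint_mul.sub ((hint a).const_mul p)
  · exact (hint_mul.sub ((hint a).const_mul p)).sub ((hint c).const_mul p)

section Graphon

variable {α : Type*} [MeasurableSpace α] {μ : Measure α} [IsProbabilityMeasure μ]
  {W : α → α → ℝ}

theorem integral_codegree_eq_integral_degree_sq (hW : Measurable (Function.uncurry W))
    (hsymm : ∀ x y, W x y = W y x) (hW1 : ∀ x y, |W x y| ≤ 1) :
    ∫ z, codegree μ W z.1 z.2 ∂(μ.prod μ) = ∫ a, degree μ W a ^ 2 ∂μ := by
  rw [integral_codegree_eq_integral_sq hW hW1]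
  simp only [degree, hsymm _]

theorem integral_cycle4_eq_integral_codegree_sq (hW : Measurable (Function.uncurry W))
    (hsymm : ∀ x y, W x y = W y x) (hW1 : ∀ x y, |W x y| ≤ 1) :
    (∫ a, ∫ b, ∫ c, ∫ d, W a b * W b c * W c d * W d a ∂μ ∂μ ∂μ ∂μ)
      = ∫ z, codegree μ W z.1 z.2 ^ 2 ∂(μ.prod μ) := by
  have hg_meas := measurable_codegree (ν := μ) hW
  have hg1 := abs_codegree_le (ν := μ) hW1
  have hint_sq : Integrable (fun z : α × α => codegree μ W z.1 z.2 ^ 2) (μ.prod μ) :=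
    .of_bound (by fun_prop) 1 (.of_forall fun z => by
      simpa using (hg1 z.1 z.2).trans_eq (one_mul 1))
  rw [integral_prod _ hint_sq]
  refine integral_congr_ae (.of_forall fun a => ?_)
  have hd : ∀ b c, ∫ d, W a b * W b c * W c d * W d a ∂μ = W a b * W c b * codegree μ W c a := by
    intro b c
    have hexpand : (fun d => W a b * W b c * W c d * W d a)
        = fun d => W a b * W c b * (W c d * W a d) := by
      funext d; rw [hsymm b c, hsymm d a]; ring
    rw [hexpand, integral_const_mul]
    rfl
  have hint : Integrable (fun q : α × α => W a q.1 * W q.2 q.1 * codegree μ W q.2 a)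
      (μ.prod μ) :=
    .of_bound (by fun_prop) 1 (.of_forall fun q => by
      simp only [Real.norm_eq_abs, abs_mul]
      exact mul_le_one₀ (mul_le_one₀ (hW1 _ _) (abs_nonneg _) (hW1 _ _)) (abs_nonneg _)
        ((hg1 _ _).trans_eq (one_mul 1)))
  calc ∫ b, ∫ c, ∫ d, W a b * W b c * W c d * W d a ∂μ ∂μ ∂μ
      = ∫ b, ∫ c, W a b * W c b * codegree μ W c a ∂μ ∂μ := by simp only [hd]
    _ = ∫ c, ∫ b, W a b * W c b * codegree μ W c a ∂μ ∂μ := integral_integral_swap hint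
    _ = ∫ c, codegree μ W a c ^ 2 ∂μ := by
      simp only [integral_mul_const, codegree_comm W _ a, sq]
      rfl

theorem ae_degree_eq_and_ae_codegree_eq_of_integral_codegree_sq_eq
    (hW : Measurable (Function.uncurry W)) (hsymm : ∀ x y, W x y = W y x)
    (hW1 : ∀ x y, |W x y| ≤ 1) {p : ℝ} (hp : ∫ a, degree μ W a ∂μ = p)
    (h : ∫ z, codegree μ W z.1 z.2 ^ 2 ∂(μ.prod μ) = p ^ 4) :
    (∀ᵐ a ∂μ, degree μ W a = p) ∧ ∀ᵐ z ∂(μ.prod μ), codegree μ W z.1 z.2 = p ^ 2 := by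
  have hd : MemLp (degree μ W) 2 μ :=
    .of_bound (measurable_degree hW).aestronglyMeasurable 1 (.of_forall (abs_degree_le hW1))
  have hg : MemLp (fun z : α × α => codegree μ W z.1 z.2) 2 (μ.prod μ) :=
    .of_bound (measurable_codegree hW).aestronglyMeasurable 1
      (.of_forall fun z => (abs_codegree_le hW1 z.1 z.2).trans_eq (one_mul 1))
  have hg_int := integral_codegree_eq_integral_degree_sq (μ := μ) hW hsymm hW1
  set q := ∫ a, degree μ W a ^ 2 ∂μ
  have hpq : p ^ 2 ≤ q := hp ▸ sq_integral_le_integral_sq hd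
  have hqp : q ^ 2 ≤ p ^ 4 := hg_int ▸ h ▸ sq_integral_le_integral_sq hg
  have hq : q = p ^ 2 := by nlinarith [sq_nonneg p]
  constructor
  · simpa [hp] using ae_eq_integral_of_integral_sq_eq hd (by rw [hp, ← hq])
  · simpa [hg_int, hq] using ae_eq_integral_of_integral_sq_eq hg (by rw [h, hg_int, hq]; ring)

end Graphon

/-- if the edge density is `p` and `t(C₄, W) = p⁴`, then `W ≡ p`
almost everywhere (Chung–Graham–Wilson). -/
theorem stmt9 (W : ℝ → ℝ → ℝ) (hW : IsGraphon W) (p : ℝ)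
    (hP1 : (∫ x, ∫ y, W x y ∂μ01 ∂μ01) = p)
    (hC4 : (∫ a, ∫ b, ∫ c, ∫ d, W a b * W b c * W c d * W d a
      ∂μ01 ∂μ01 ∂μ01 ∂μ01) = p ^ 4) :
    ∀ᵐ z ∂(μ01.prod μ01), W z.1 z.2 = p := by
  obtain ⟨hmeas, hsymm, hW01⟩ := hW
  have hW1 : ∀ x y, |W x y| ≤ 1 := fun x y => abs_le.mpr ⟨by linarith [(hW01 x y).1], (hW01 x y).2⟩
  rw [integral_cycle4_eq_integral_codegree_sq hmeas hsymm hW1] at hC4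
  obtain ⟨hdeg, hcodeg⟩ :=
    ae_degree_eq_and_ae_codegree_eq_of_integral_codegree_sq_eq hmeas hsymm hW1 hP1 hC4
  have hcodeg_sub : ∀ᵐ z ∂(μ01.prod μ01), codegree μ01 (fun a b => W a b - p) z.1 z.2 = 0 := by
    filter_upwards [hcodeg, Measure.quasiMeasurePreserving_fst.ae hdeg,
      Measure.quasiMeasurePreserving_snd.ae hdeg] with z hg hd₁ hd₂
    rw [codegree_sub_const (ν := μ01) hmeas hW1, hg, hd₁, hd₂]
    ring
  have hsub_meas : Measurable (Function.uncurry fun a b => W a b - p) := hmeas.sub_const p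
  have hsub_le : ∀ a b, |W a b - p| ≤ 1 + |p| := fun a b =>
    (abs_sub _ _).trans (by linarith [hW1 a b])
  filter_upwards [ae_eq_zero_of_codegree_ae_eq_zero hsub_meas hsub_le hcodeg_sub] with z hz
  exact sub_eq_zero.mp hz
end
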